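/- arXiv:2301.01854 — 3 statements merged into one kernel-verified Lean document; each statement's English description precedes it below -/
import Mathlib

section
/- With Q the matrix whose columns are the simplified Gram–Schmidt vectors of the columns of X, the matrix Q^T X is upper triangular with diagonal entries ⟨q_i,q_i⟩; equivalently, Q^T X equals the upper triangular factor U produced by LU (Doolittle-type) factorization of the Gram matrix X^T X. -/
open Matrix

/-- Simplified (non-normalized) Gram–Schmidt process. -/
noncomputable def gs {n p : ℕ} (x : Fin p → Fin n → ℝ) (i : Fin p) : Fin n → ℝ :=
  x i - ∑ j : Fin p, if h : j < i then ((gs x j ⬝ᵥ x i) / (gs x j ⬝ᵥ gs x j)) • gs x j else 0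
termination_by i.1
decreasing_by exact h

/-- Doolittle-type recursion for the upper triangular factor, with columns `c`
(indexed by `Fin q`) and an embedding `emb` of the row indices into the column indices. -/
noncomputable def Ufac {n p q : ℕ} (x : Fin p → Fin n → ℝ) (c : Fin q → Fin n → ℝ)
    (emb : Fin p → Fin q) (i : Fin p) (j : Fin q) : ℝ :=
  x i ⬝ᵥ c j - ∑ k : Fin p, if h : k < i then
    Ufac x c emb k (emb i) * Ufac x c emb k j / Ufac x c emb k (emb k) else 0
termination_by i.1
decreasing_by all_goals exact h

lemma sum_dot {m n : ℕ} (f : Fin m → Fin n → ℝ) (w : Fin n → ℝ) :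
    (∑ k : Fin m, f k) ⬝ᵥ w = ∑ k : Fin m, f k ⬝ᵥ w := by
  simp only [dotProduct, Finset.sum_apply, Finset.sum_mul]
  exact Finset.sum_comm

lemma dot_sum {m n : ℕ} (w : Fin n → ℝ) (f : Fin m → Fin n → ℝ) :
    w ⬝ᵥ (∑ k : Fin m, f k) = ∑ k : Fin m, w ⬝ᵥ f k := by
  simp only [dotProduct, Finset.sum_apply, Finset.mul_sum]
  exact Finset.sum_comm

lemma gs_orth {n p : ℕ} (x : Fin p → Fin n → ℝ) (i j : Fin p) (hj : j < i) :
    gs x i ⬝ᵥ gs x j = 0 := by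
  rw [gs, sub_dotProduct, sum_dot]
  have hsum : ∀ k ∈ Finset.univ, ((if h : k < i then
      ((gs x k ⬝ᵥ x i) / (gs x k ⬝ᵥ gs x k)) • gs x k else 0) ⬝ᵥ gs x j)
      = if k = j then ((gs x j ⬝ᵥ x i) / (gs x j ⬝ᵥ gs x j)) * (gs x j ⬝ᵥ gs x j) else 0 := by
    intro k _
    rcases eq_or_ne k j with rfl | hkj
    · rw [dif_pos hj, if_pos rfl, smul_dotProduct, smul_eq_mul]
    · rw [if_neg hkj]
      split_ifs with h
      · rw [smul_dotProduct, smul_eq_mul]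
        rw [dotProduct_comm (gs x k) (gs x j)]
        rcases lt_or_gt_of_ne hkj with hlt | hgt
        · rw [gs_orth x j k hlt, mul_zero]
        · rw [dotProduct_comm (gs x j) (gs x k), gs_orth x k j hgt, mul_zero]
      · rw [zero_dotProduct]
  rw [Finset.sum_congr rfl hsum, Finset.sum_ite_eq' Finset.univ j, if_pos (Finset.mem_univ j)]
  by_cases h0 : gs x j ⬝ᵥ gs x j = 0
  · have hz : gs x j = 0 := dotProduct_self_eq_zero.mp h0
    simp [hz]
  · rw [div_mul_cancel₀ _ h0, dotProduct_comm, sub_self]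
termination_by i.1
decreasing_by
  · exact hj
  · exact h

lemma gs_dot_x {n p : ℕ} (x : Fin p → Fin n → ℝ) (i j : Fin p) (hj : j ≤ i) :
    gs x i ⬝ᵥ x j = gs x i ⬝ᵥ gs x j := by
  have hxj : x j = gs x j + ∑ k : Fin p, if h : k < j then
      ((gs x k ⬝ᵥ x j) / (gs x k ⬝ᵥ gs x k)) • gs x k else 0 := by
    rw [gs]; ring
  rw [hxj, dotProduct_add, dot_sum]
  have : ∀ k ∈ Finset.univ, (gs x i ⬝ᵥ if h : k < j then
      ((gs x k ⬝ᵥ x j) / (gs x k ⬝ᵥ gs x k)) • gs x k else 0) = 0 := by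
    intro k _
    split_ifs with h
    · rw [dotProduct_smul, gs_orth x i k (lt_of_lt_of_le h hj), smul_zero]
    · rw [dotProduct_zero]
  rw [Finset.sum_congr rfl this, Finset.sum_const_zero, add_zero]

lemma ufac_eq {n p : ℕ} (x : Fin p → Fin n → ℝ) (i : Fin p) (j : Fin p) :
    Ufac x x id i j = gs x i ⬝ᵥ x j := by
  rw [Ufac, gs, sub_dotProduct, sum_dot]
  congr 1
  refine Finset.sum_congr rfl fun k _ => ?_
  split_ifs with h
  · rw [smul_dotProduct, ufac_eq x k, ufac_eq x k, ufac_eq x k, smul_eq_mul]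
    have hkk : gs x k ⬝ᵥ x k = gs x k ⬝ᵥ gs x k := gs_dot_x x k k le_rfl
    simp only [id]
    rw [hkk]
    ring
  · rw [zero_dotProduct]
termination_by i.1
decreasing_by all_goals exact h

theorem QtX_eq_LU_factor {n p : ℕ} (X : Matrix (Fin n) (Fin p) ℝ)
    (x : Fin p → Fin n → ℝ) (hx : x = fun i k => X k i)
    (hli : LinearIndependent ℝ x)
    (Q : Matrix (Fin n) (Fin p) ℝ) (hQ : Q = Matrix.of fun k i => gs x i k) :
    (∀ i j : Fin p, (j : ℕ) < i → (Qᵀ * X) i j = 0) ∧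
    (∀ i : Fin p, (Qᵀ * X) i i = gs x i ⬝ᵥ gs x i) ∧
    (∀ i j : Fin p, (Qᵀ * X) i j = Ufac x x id i j) := by
  have key : ∀ i j : Fin p, (Qᵀ * X) i j = gs x i ⬝ᵥ x j := by
    intro i j
    simp only [Matrix.mul_apply, Matrix.transpose_apply, hQ, Matrix.of_apply, dotProduct]
    refine Finset.sum_congr rfl fun k _ => ?_
    rw [hx]
  refine ⟨fun i j hij => ?_, fun i => ?_, fun i j => ?_⟩
  · have hji : j < i := hij
    rw [key, gs_dot_x x i j hji.le, gs_orth x i j hji]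
  · rw [key, gs_dot_x x i i le_rfl]
  · rw [key, ufac_eq]
end

section
/- The last OLS coefficient has the closed form β̂_p = ⟨q_p, y⟩ / ⟨q_p, q_p⟩, where q_p is the last simplified Gram–Schmidt vector of the columns of X. -/
open Matrix

lemma dotProduct_sum' {n : ℕ} {ι : Type*} (s : Finset ι) (v : Fin n → ℝ)
    (f : ι → Fin n → ℝ) : v ⬝ᵥ (∑ i ∈ s, f i) = ∑ i ∈ s, v ⬝ᵥ f i := by
  simp only [dotProduct, Finset.sum_apply, Finset.mul_sum]
  rw [Finset.sum_comm]

lemma gs_def {n p : ℕ} (x : Fin p → Fin n → ℝ) (i : Fin p) :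
    gs x i = x i - ∑ j : Fin p,
      if h : j < i then ((gs x j ⬝ᵥ x i) / (gs x j ⬝ᵥ gs x j)) • gs x j else 0 := by
  rw [gs]

theorem gs_ortho {n p : ℕ} (x : Fin p → Fin n → ℝ) (i j : Fin p) (h : j < i) :
    gs x j ⬝ᵥ gs x i = 0 := by
  by_cases h0 : gs x j ⬝ᵥ gs x j = 0
  · rw [dotProduct_self_eq_zero.mp h0]; simp
  · have hsum : (∑ k : Fin p, gs x j ⬝ᵥ
        (if hk : k < i then ((gs x k ⬝ᵥ x i) / (gs x k ⬝ᵥ gs x k)) • gs x k else 0))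
        = gs x j ⬝ᵥ x i := by
      rw [Finset.sum_eq_single_of_mem j (Finset.mem_univ j)]
      · rw [dif_pos h, dotProduct_smul, smul_eq_mul, div_mul_cancel₀ _ h0]
      · intro k _ hk
        by_cases hki : k < i
        · rw [dif_pos hki, dotProduct_smul, smul_eq_mul]
          rcases lt_or_gt_of_ne hk.symm with hlt | hgt
          · rw [gs_ortho x k j hlt, mul_zero]
          · rw [dotProduct_comm (gs x j) (gs x k), gs_ortho x j k hgt, mul_zero]
        · rw [dif_neg hki, dotProduct_zero]
    rw [gs_def x i, dotProduct_sub, dotProduct_sum' _ _ _, hsum, sub_self]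
termination_by i.1
decreasing_by
  all_goals first | exact h | exact hki

theorem gs_mem_span {n p : ℕ} (x : Fin p → Fin n → ℝ) (i : Fin p) :
    gs x i ∈ Submodule.span ℝ (x '' {j | j ≤ i}) := by
  rw [gs_def]
  refine sub_mem (Submodule.subset_span ⟨i, le_refl i, rfl⟩) (Submodule.sum_mem _ ?_)
  intro k _
  by_cases hk : k < i
  · rw [dif_pos hk]
    exact Submodule.smul_mem _ _ (Submodule.span_mono
      (Set.image_mono fun j hj => le_trans hj hk.le) (gs_mem_span x k))
  · rw [dif_neg hk]; exact zero_mem _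
termination_by i.1
decreasing_by exact hk

theorem gs_dot_col {n p : ℕ} (x : Fin p → Fin n → ℝ) (i j : Fin p) (h : j < i) :
    gs x i ⬝ᵥ x j = 0 := by
  have hxj : x j = gs x j + ∑ k : Fin p,
      (if hk : k < j then ((gs x k ⬝ᵥ x j) / (gs x k ⬝ᵥ gs x k)) • gs x k else 0) := by
    rw [gs_def x j]; abel
  have h1 : gs x i ⬝ᵥ gs x j = 0 := by rw [dotProduct_comm]; exact gs_ortho x i j h
  rw [hxj, dotProduct_add, dotProduct_sum' _ _ _, h1, zero_add]
  apply Finset.sum_eq_zero; intro k _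
  by_cases hk : k < j
  · rw [dif_pos hk, dotProduct_smul, smul_eq_mul, dotProduct_comm (gs x i) (gs x k),
      gs_ortho x i k (hk.trans h), mul_zero]
  · rw [dif_neg hk, dotProduct_zero]

theorem gs_dot_self_col {n p : ℕ} (x : Fin p → Fin n → ℝ) (i : Fin p) :
    gs x i ⬝ᵥ x i = gs x i ⬝ᵥ gs x i := by
  have hxi : x i = gs x i + ∑ k : Fin p,
      (if hk : k < i then ((gs x k ⬝ᵥ x i) / (gs x k ⬝ᵥ gs x k)) • gs x k else 0) := by
    rw [gs_def x i]; abel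
  nth_rewrite 1 [hxi]
  rw [dotProduct_add, dotProduct_sum' _ _ _]
  have : ∀ k ∈ Finset.univ, gs x i ⬝ᵥ
      (if hk : k < i then ((gs x k ⬝ᵥ x i) / (gs x k ⬝ᵥ gs x k)) • gs x k else 0) = 0 := by
    intro k _
    by_cases hk : k < i
    · rw [dif_pos hk, dotProduct_smul, smul_eq_mul, dotProduct_comm (gs x i) (gs x k),
        gs_ortho x i k hk, mul_zero]
    · rw [dif_neg hk, dotProduct_zero]
  rw [Finset.sum_eq_zero this, add_zero]

theorem gs_ne_zero {n p : ℕ} (x : Fin p → Fin n → ℝ) (hli : LinearIndependent ℝ x)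
    (i : Fin p) : gs x i ≠ 0 := by
  intro h0
  have hdef := gs_def x i
  rw [h0, eq_comm, sub_eq_zero] at hdef
  have hx : x i ∈ Submodule.span ℝ (x '' {j | j < i}) := by
    rw [hdef]
    apply Submodule.sum_mem
    intro k _
    by_cases hk : k < i
    · rw [dif_pos hk]
      exact Submodule.smul_mem _ _ (Submodule.span_mono
        (Set.image_mono fun j hj => lt_of_le_of_lt hj hk) (gs_mem_span x k))
    · rw [dif_neg hk]; exact zero_mem _
  exact hli.notMem_span_image (by simp) hx

theorem last_coefficient_closed_form {n p : ℕ} (X : Matrix (Fin n) (Fin (p + 1)) ℝ)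
    (y : Fin n → ℝ)
    (x : Fin (p + 1) → Fin n → ℝ) (hx : x = fun i k => X k i)
    (hli : LinearIndependent ℝ x)
    (β : Fin (p + 1) → ℝ) (hβ : β = ((Xᵀ * X)⁻¹ * Xᵀ) *ᵥ y) :
    β (Fin.last p) = (gs x (Fin.last p) ⬝ᵥ y) / (gs x (Fin.last p) ⬝ᵥ gs x (Fin.last p)) := by
  set q := gs x (Fin.last p) with hq
  -- X *ᵥ v as a combination of the columns
  have hXv : ∀ v : Fin (p + 1) → ℝ, X *ᵥ v = ∑ j, v j • x j := by
    intro v; ext k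
    simp only [mulVec, dotProduct, Finset.sum_apply, Pi.smul_apply, smul_eq_mul, hx]
    exact Finset.sum_congr rfl fun j _ => mul_comm _ _
  -- (Xᵀ * X) is invertible
  have hdet : IsUnit (Xᵀ * X).det := by
    rw [isUnit_iff_ne_zero]
    intro hd
    obtain ⟨v, hv0, hv⟩ := (Matrix.exists_mulVec_eq_zero_iff).mpr hd
    have hXvz : X *ᵥ v = 0 := by
      have := Matrix.ker_mulVecLin_transpose_mul_self X
      have hmem : v ∈ LinearMap.ker (Xᵀ * X).mulVecLin := hv
      rw [this] at hmem
      exact hmem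
    rw [hXv v] at hXvz
    exact hv0 (funext fun j => Fintype.linearIndependent_iff.mp hli v hXvz j)
  -- normal equations
  have hnorm : (Xᵀ * X) *ᵥ β = Xᵀ *ᵥ y := by
    rw [hβ, mulVec_mulVec, ← Matrix.mul_assoc, Matrix.mul_nonsing_inv _ hdet, Matrix.one_mul]
  -- each column is orthogonal to the residual
  have hcol : ∀ j, x j ⬝ᵥ (y - X *ᵥ β) = 0 := by
    intro j
    have h1 : Xᵀ *ᵥ (y - X *ᵥ β) = 0 := by
      rw [mulVec_sub, mulVec_mulVec, hnorm, sub_self]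
    have h2 : (Xᵀ *ᵥ (y - X *ᵥ β)) j = x j ⬝ᵥ (y - X *ᵥ β) := by
      simp only [mulVec, dotProduct, transpose_apply, hx]
    rw [← h2, h1]; rfl
  -- q is orthogonal to the residual
  have hspan : ∀ v ∈ Submodule.span ℝ (Set.range x), v ⬝ᵥ (y - X *ᵥ β) = 0 := by
    intro v hv
    induction hv using Submodule.span_induction with
    | mem v hv => obtain ⟨j, rfl⟩ := hv; exact hcol j
    | zero => simp
    | add u v _ _ hu hv => rw [add_dotProduct, hu, hv, add_zero]
    | smul a v _ hv => rw [smul_dotProduct, hv, smul_zero]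
  have hq_res : q ⬝ᵥ (y - X *ᵥ β) = 0 :=
    hspan q (Submodule.span_mono (Set.image_subset_range _ _) (gs_mem_span x (Fin.last p)))
  have hqy : q ⬝ᵥ y = q ⬝ᵥ (X *ᵥ β) := by
    have := hq_res
    rw [dotProduct_sub, sub_eq_zero] at this
    exact this
  -- compute q ⬝ᵥ (X *ᵥ β)
  have hqXβ : q ⬝ᵥ (X *ᵥ β) = β (Fin.last p) * (q ⬝ᵥ q) := by
    rw [hXv β, dotProduct_sum' _ _ _]
    rw [Finset.sum_eq_single_of_mem (Fin.last p) (Finset.mem_univ _)]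
    · rw [dotProduct_smul, smul_eq_mul, hq, gs_dot_self_col]
    · intro j _ hj
      have hjlt : j < Fin.last p := lt_of_le_of_ne (Fin.le_last j) hj
      rw [dotProduct_smul, smul_eq_mul, hq, gs_dot_col x _ j hjlt, mul_zero]
  have hqq : q ⬝ᵥ q ≠ 0 := fun h =>
    gs_ne_zero x hli (Fin.last p) (dotProduct_self_eq_zero.mp h)
  rw [hqy, hqXβ, mul_div_assoc, div_self hqq, mul_one]
end

section
/- The second-to-last OLS coefficient has the closed form β̂_{p-1} = (q_{p-1}^o)^T [I - x_p (q_p^o)^T] y, where q_i^o = q_i/⟨q_i,q_i⟩. -/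
/-!
The residual `y - X β̂` is orthogonal to every column of `X`, hence to every Gram–Schmidt
vector `q_i`, which lies in their span. Since `q_i ⟂ x_j` for `j < i` and
`⟨q_i, x_i⟩ = ⟨q_i, q_i⟩`, the vector `q_i^o` reads off the coefficient of `x_i` from any
combination of `x_1, …, x_i`. Applied to `X β̂` this gives `(q_p^o)ᵀ y = β̂_p`, and applied to
`X β̂ - β̂_p x_p` it gives `(q_{p-1}^o)ᵀ (y - β̂_p x_p) = β̂_{p-1}`.
-/

open Matrix

open InnerProductSpace Submodule WithLp

section GramSchmidt

variable {𝕜 E ι : Type*} [RCLike 𝕜] [NormedAddCommGroup E] [InnerProductSpace 𝕜 E]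
  [LinearOrder ι] [LocallyFiniteOrderBot ι] [WellFoundedLT ι]

local notation "⟪" x ", " y "⟫" => inner 𝕜 x y

theorem inner_gramSchmidt_apply_self (f : ι → E) (i : ι) :
    ⟪gramSchmidt 𝕜 f i, f i⟫ = ⟪gramSchmidt 𝕜 f i, gramSchmidt 𝕜 f i⟫ := by
  rw [gramSchmidt_def'' 𝕜 f i, inner_add_right, inner_sum, add_eq_left]
  refine Finset.sum_eq_zero fun j hj ↦ ?_
  rw [inner_smul_right, gramSchmidt_orthogonal 𝕜 f (Finset.mem_Iio.1 hj).ne', mul_zero]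

theorem inner_gramSchmidt_sum_Iic (f : ι → E) (w : ι → 𝕜) (i : ι) :
    ⟪gramSchmidt 𝕜 f i, ∑ j ∈ Finset.Iic i, w j • f j⟫ =
      w i * ⟪gramSchmidt 𝕜 f i, gramSchmidt 𝕜 f i⟫ := by
  rw [inner_sum, Finset.sum_eq_single_of_mem i (Finset.mem_Iic.2 le_rfl), inner_smul_right,
    inner_gramSchmidt_apply_self]
  intro j hj hji
  rw [inner_smul_right, gramSchmidt_inv_triangular 𝕜 f (lt_of_le_of_ne (Finset.mem_Iic.1 hj) hji),
    mul_zero]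

theorem inner_gramSchmidt_eq_zero_of_forall {f : ι → E} {v : E} (h : ∀ j, ⟪f j, v⟫ = 0)
    (i : ι) : ⟪gramSchmidt 𝕜 f i, v⟫ = 0 := by
  have hspan : span 𝕜 (Set.range f) ≤ (𝕜 ∙ v)ᗮ :=
    span_le.2 <| Set.range_subset_iff.2 fun j ↦ mem_orthogonal_singleton_iff_inner_left.2 (h j)
  refine mem_orthogonal_singleton_iff_inner_left.1 (hspan ?_)
  rw [← span_gramSchmidt 𝕜 f]
  exact subset_span (Set.mem_range_self i)

end GramSchmidt

section gs

variable {n p : ℕ}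

theorem toLp_gs (x : Fin p → Fin n → ℝ) (i : Fin p) :
    toLp 2 (gs x i) = gramSchmidt ℝ (fun j ↦ toLp 2 (x j)) i := by
  induction i using WellFoundedLT.induction with
  | _ i ih =>
  rw [gs, gramSchmidt_def]
  simp only [dite_eq_ite]
  rw [← Finset.sum_filter, Finset.filter_gt_eq_Iio, toLp_sub, toLp_sum]
  congr 1
  refine Finset.sum_congr rfl fun j hj ↦ ?_
  rw [starProjection_singleton, ← ih j (Finset.mem_Iio.1 hj), toLp_smul,
    ← real_inner_self_eq_norm_sq, EuclideanSpace.inner_toLp_toLp, EuclideanSpace.inner_toLp_toLp]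
  simp [dotProduct_comm]

theorem gs_dotProduct (x : Fin p → Fin n → ℝ) (i : Fin p) (v : Fin n → ℝ) :
    gs x i ⬝ᵥ v = inner ℝ (gramSchmidt ℝ (fun j ↦ toLp 2 (x j)) i) (toLp 2 v) := by
  rw [← toLp_gs, EuclideanSpace.inner_toLp_toLp, star_trivial, dotProduct_comm]

theorem gs_dotProduct_self_ne_zero {x : Fin p → Fin n → ℝ} (hx : LinearIndependent ℝ x)
    (i : Fin p) : gs x i ⬝ᵥ gs x i ≠ 0 := by
  rw [Ne, dotProduct_self_eq_zero, ← (toLp_injective 2).eq_iff, toLp_gs, toLp_zero]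
  exact gramSchmidt_ne_zero i (hx.map' (WithLp.linearEquiv 2 ℝ _).symm.toLinearMap (by simp))

theorem gs_dotProduct_sum_Iic (x : Fin p → Fin n → ℝ) (w : Fin p → ℝ) (i : Fin p) :
    gs x i ⬝ᵥ ∑ j ∈ Finset.Iic i, w j • x j = w i * (gs x i ⬝ᵥ gs x i) := by
  rw [gs_dotProduct, gs_dotProduct, toLp_sum]
  simpa only [toLp_smul, toLp_gs] using inner_gramSchmidt_sum_Iic _ w i

theorem inv_smul_gs_dotProduct_sum_Iic {x : Fin p → Fin n → ℝ} (hx : LinearIndependent ℝ x)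
    (w : Fin p → ℝ) (i : Fin p) :
    ((gs x i ⬝ᵥ gs x i)⁻¹ • gs x i) ⬝ᵥ ∑ j ∈ Finset.Iic i, w j • x j = w i := by
  rw [smul_dotProduct, gs_dotProduct_sum_Iic, smul_eq_mul, mul_comm (w i),
    inv_mul_cancel_left₀ (gs_dotProduct_self_ne_zero hx i)]

theorem gs_dotProduct_eq_of_forall {x : Fin p → Fin n → ℝ} {u v : Fin n → ℝ}
    (h : ∀ j, x j ⬝ᵥ u = x j ⬝ᵥ v) (i : Fin p) : gs x i ⬝ᵥ u = gs x i ⬝ᵥ v := by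
  rw [← sub_eq_zero, ← dotProduct_sub, gs_dotProduct]
  refine inner_gramSchmidt_eq_zero_of_forall (fun j ↦ ?_) i
  rw [EuclideanSpace.inner_toLp_toLp, star_trivial, dotProduct_comm, dotProduct_sub, h j, sub_self]

end gs

section LeastSquares

variable {m k R : Type*} [Fintype m] [Fintype k] [DecidableEq k]
  [Field R] [LinearOrder R] [IsStrictOrderedRing R]

theorem isUnit_transpose_mul_self {X : Matrix m k R} (hX : LinearIndependent R X.col) :
    IsUnit (Xᵀ * X) := by
  have hker : LinearMap.ker X.mulVecLin = ⊥ := LinearMap.ker_eq_bot.2 (mulVec_injective_iff.2 hX)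
  rw [← ker_mulVecLin_transpose_mul_self] at hker
  exact mulVec_injective_iff_isUnit.1 (LinearMap.ker_eq_bot.1 hker)

theorem col_dotProduct_mulVec_leastSquares {X : Matrix m k R} (hX : LinearIndependent R X.col)
    (y : m → R) (j : k) : X.col j ⬝ᵥ (X *ᵥ (((Xᵀ * X)⁻¹ * Xᵀ) *ᵥ y)) = X.col j ⬝ᵥ y := by
  have hnormal : (Xᵀ * X) *ᵥ (((Xᵀ * X)⁻¹ * Xᵀ) *ᵥ y) = Xᵀ *ᵥ y := by
    rw [mulVec_mulVec, ← Matrix.mul_assoc,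
      mul_nonsing_inv _ ((isUnit_transpose_mul_self hX).map detMonoidHom), Matrix.one_mul]
  rw [← mulVec_mulVec] at hnormal
  exact congrFun hnormal j

end LeastSquares

theorem second_to_last_coefficient_closed_form {n p : ℕ}
    (X : Matrix (Fin n) (Fin (p + 2)) ℝ) (y : Fin n → ℝ)
    (x : Fin (p + 2) → Fin n → ℝ) (hx : x = fun i k => X k i)
    (hli : LinearIndependent ℝ x)
    (β : Fin (p + 2) → ℝ) (hβ : β = ((Xᵀ * X)⁻¹ * Xᵀ) *ᵥ y)
    (qo : Fin (p + 2) → Fin n → ℝ) (hqo : qo = fun i => (gs x i ⬝ᵥ gs x i)⁻¹ • gs x i) :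
    β ⟨p, by omega⟩ = qo ⟨p, by omega⟩ ⬝ᵥ
      (((1 : Matrix (Fin n) (Fin n) ℝ) - vecMulVec (x (Fin.last (p + 1))) (qo (Fin.last (p + 1)))) *ᵥ y) := by
  set P : Fin (p + 2) := ⟨p, by omega⟩
  set L := Fin.last (p + 1)
  change x = X.col at hx
  subst hx hqo
  have hXβ : X *ᵥ β = ∑ j, β j • X.col j := by
    simp only [mulVec_eq_sum, op_smul_eq_smul]
    rfl
  have hfit (i : Fin (p + 2)) : gs X.col i ⬝ᵥ y = gs X.col i ⬝ᵥ ∑ j, β j • X.col j := by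
    have hres j : X.col j ⬝ᵥ y = X.col j ⬝ᵥ X *ᵥ β := by
      rw [hβ, col_dotProduct_mulVec_leastSquares hli]
    rw [gs_dotProduct_eq_of_forall hres, hXβ]
  have hL : ((gs X.col L ⬝ᵥ gs X.col L)⁻¹ • gs X.col L) ⬝ᵥ y = β L := by
    rw [smul_dotProduct, hfit, ← smul_dotProduct, ← inv_smul_gs_dotProduct_sum_Iic hli β L,
      show Finset.Iic L = Finset.univ from Finset.Iic_top]
  have hP : ((gs X.col P ⬝ᵥ gs X.col P)⁻¹ • gs X.col P) ⬝ᵥ (y - β L • X.col L) = β P := by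
    have hIic : Finset.Iic P = Finset.univ.erase L := by
      ext j
      simp only [Finset.mem_Iic, Finset.mem_erase, Finset.mem_univ, and_true, ne_eq, Fin.le_def,
        Fin.ext_iff, Fin.val_last, P, L]
      omega
    rw [dotProduct_sub, smul_dotProduct, hfit, ← smul_dotProduct, ← dotProduct_sub, ← Finset.sum_erase_eq_sub (Finset.mem_univ L),
      ← hIic, inv_smul_gs_dotProduct_sum_Iic hli]
  rw [sub_mulVec, one_mulVec, vecMulVec_mulVec, op_smul_eq_smul, hL, hP]
end
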